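/- arXiv:2204.11711 — 3 statements merged into one kernel-verified Lean document; each statement's English description precedes it below -/
import Mathlib

section
/- Let $a_1,a_2>0$ and $\beta>\max\{a_1,a_2\}$, and set $\gamma_1=\frac{\beta-a_2}{\beta^2-a_1a_2}$, $\gamma_2=\frac{\beta-a_1}{\beta^2-a_1a_2}$. Then $3a_1\gamma_1+\beta\gamma_2\in(1,3)$. -/
/-! With `D = β² - a₁a₂ > 0`, the quantity is `N / D` where `N - D = 2a₁(β - a₂)` and
`3D - N = 2β(β - a₁)`; both differences are positive. -/

lemma mul_lt_sq_of_lt {a₁ a₂ β : ℝ} (ha₁ : 0 < a₁) (h₁ : a₁ < β) (h₂ : a₂ < β) :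
    a₁ * a₂ < β ^ 2 :=
  calc a₁ * a₂ < a₁ * β := mul_lt_mul_of_pos_left h₂ ha₁
    _ < β * β := mul_lt_mul_of_pos_right h₁ (ha₁.trans h₁)
    _ = β ^ 2 := (sq β).symm

theorem stmt_2_general (a₁ a₂ β : ℝ) (ha₁ : 0 < a₁) (hβ : max a₁ a₂ < β)
    (γ₁ γ₂ : ℝ) (hγ₁ : γ₁ = (β - a₂) / (β ^ 2 - a₁ * a₂))
    (hγ₂ : γ₂ = (β - a₁) / (β ^ 2 - a₁ * a₂)) :
    3 * a₁ * γ₁ + β * γ₂ ∈ Set.Ioo (1 : ℝ) 3 := by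
  obtain ⟨h₁, h₂⟩ := max_lt_iff.mp hβ
  have hD : 0 < β ^ 2 - a₁ * a₂ := sub_pos.mpr (mul_lt_sq_of_lt ha₁ h₁ h₂)
  have key : 3 * a₁ * γ₁ + β * γ₂
      = (3 * a₁ * (β - a₂) + β * (β - a₁)) / (β ^ 2 - a₁ * a₂) := by
    rw [hγ₁, hγ₂]; ring
  rw [key]
  constructor
  · rw [one_lt_div hD]
    linarith [mul_pos ha₁ (sub_pos.mpr h₂)]
  · rw [div_lt_iff₀ hD]
    linarith [mul_pos (ha₁.trans h₁) (sub_pos.mpr h₁)]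

theorem stmt_2 (a₁ a₂ β : ℝ) (ha₁ : 0 < a₁) (ha₂ : 0 < a₂) (hβ : max a₁ a₂ < β)
    (γ₁ γ₂ : ℝ) (hγ₁ : γ₁ = (β - a₂) / (β ^ 2 - a₁ * a₂))
    (hγ₂ : γ₂ = (β - a₁) / (β ^ 2 - a₁ * a₂)) :
    3 * a₁ * γ₁ + β * γ₂ ∈ Set.Ioo (1 : ℝ) 3 :=
  stmt_2_general a₁ a₂ β ha₁ hβ γ₁ γ₂ hγ₁ hγ₂
end

section
/- Let $a_1,a_2>0$ and $\beta>\max\{a_1,a_2\}$, and set $\gamma_1=\frac{\beta-a_2}{\beta^2-a_1a_2}$, $\gamma_2=\frac{\beta-a_1}{\beta^2-a_1a_2}$. Then $a_1\gamma_1^2+a_2\gamma_2^2+2\beta\gamma_1\gamma_2<\min\{1/a_1,\,1/a_2\}$. -/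
/-!
The vector $(\gamma_1, \gamma_2)$ solves $a_1\gamma_1 + \beta\gamma_2 = 1$, $\beta\gamma_1 + a_2\gamma_2 = 1$,
so the quadratic form evaluated at it collapses to $\gamma_1 + \gamma_2 = (2\beta - a_1 - a_2)/(\beta^2 - a_1a_2)$.
Comparing this with $1/a_i$ reduces, after clearing the positive denominators, to $0 < (\beta - a_i)^2$.
-/

lemma quadForm_eq_add_of_solves {a₁ a₂ β γ₁ γ₂ : ℝ}
    (h₁ : a₁ * γ₁ + β * γ₂ = 1) (h₂ : β * γ₁ + a₂ * γ₂ = 1) :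
    a₁ * γ₁ ^ 2 + a₂ * γ₂ ^ 2 + 2 * β * γ₁ * γ₂ = γ₁ + γ₂ := by
  linear_combination γ₁ * h₁ + γ₂ * h₂

lemma two_mul_sub_sub_div_lt_one_div {a b β : ℝ} (ha : 0 < a) (hD : 0 < β ^ 2 - a * b)
    (haβ : a ≠ β) :
    (2 * β - a - b) / (β ^ 2 - a * b) < 1 / a := by
  rw [div_lt_div_iff₀ hD ha]
  nlinarith [sq_pos_of_ne_zero (sub_ne_zero.mpr haβ)]

theorem stmt_4 (a₁ a₂ β : ℝ) (ha₁ : 0 < a₁) (ha₂ : 0 < a₂) (hβ : max a₁ a₂ < β)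
    (γ₁ γ₂ : ℝ) (hγ₁ : γ₁ = (β - a₂) / (β ^ 2 - a₁ * a₂))
    (hγ₂ : γ₂ = (β - a₁) / (β ^ 2 - a₁ * a₂)) :
    a₁ * γ₁ ^ 2 + a₂ * γ₂ ^ 2 + 2 * β * γ₁ * γ₂ < min (1 / a₁) (1 / a₂) := by
  obtain ⟨h₁, h₂⟩ := max_lt_iff.mp hβ
  have hD : 0 < β ^ 2 - a₁ * a₂ := by nlinarith
  have hD₀ := hD.ne'
  have hsolves₁ : a₁ * γ₁ + β * γ₂ = 1 := by
    rw [hγ₁, hγ₂, mul_div_assoc', mul_div_assoc', ← add_div, div_eq_one_iff_eq hD₀]; ring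
  have hsolves₂ : β * γ₁ + a₂ * γ₂ = 1 := by
    rw [hγ₁, hγ₂, mul_div_assoc', mul_div_assoc', ← add_div, div_eq_one_iff_eq hD₀]; ring
  have hsum : γ₁ + γ₂ = (2 * β - a₁ - a₂) / (β ^ 2 - a₁ * a₂) := by
    rw [hγ₁, hγ₂, ← add_div]; ring
  rw [quadForm_eq_add_of_solves hsolves₁ hsolves₂, hsum]
  refine lt_min (two_mul_sub_sub_div_lt_one_div ha₁ hD h₁.ne) ?_
  calc (2 * β - a₁ - a₂) / (β ^ 2 - a₁ * a₂) = (2 * β - a₂ - a₁) / (β ^ 2 - a₂ * a₁) := by ring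
    _ < 1 / a₂ := two_mul_sub_sub_div_lt_one_div ha₂ (by linarith) h₂.ne
end

section
/- Let $w:\mathbb{R}^N\to(0,\infty)$ be radial, $w(x)=\rho(|x|)$ with $\rho$ strictly decreasing and $w\in L^2$ with $|x|^{p-1}w^2\in L^1$ for some $p>1$. If $y\in\mathbb{R}^N$ satisfies $\int_{\mathbb{R}^N}|x+y|^{p-2}(x+y)_j\,w^2(x)\,dx=0$ for all $j=1,\dots,N$, then $y=0$. -/
/-!
Let `φ(v) = ‖v‖ ^ (p - 2) • v`, the gradient of `‖v‖ ^ p / p`. Pairing the moment condition with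
`y` gives `∫ ⟪φ(x + y), y⟫ w(x)² dx = 0`, while `∫ ⟪φ(x), y⟫ w(x)² dx = 0` because `φ` is odd and
`w²` is even. The difference of the two integrands is `⟪φ(x + y) - φ(x), (x + y) - x⟫ w(x)²`,
which is strictly positive when `y ≠ 0` because `φ`, the gradient of a strictly convex function,
is strictly monotone.
-/

open MeasureTheory
open scoped RealInnerProductSpace

lemma Real.rpow_sub_two_mul_self {t p : ℝ} (ht : 0 ≤ t) (hp : p ≠ 1) :
    t ^ (p - 2) * t = t ^ (p - 1) := by
  have h : p - 2 + 1 = p - 1 := by ring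
  rw [← Real.rpow_add_one' ht (by rw [h]; exact sub_ne_zero.2 hp), h]

lemma Real.add_rpow_le_two_rpow_mul {a b q : ℝ} (ha : 0 ≤ a) (hb : 0 ≤ b) (hq : 0 ≤ q) :
    (a + b) ^ q ≤ 2 ^ q * (a ^ q + b ^ q) := by
  wlog hba : b ≤ a generalizing a b
  · simpa only [add_comm] using this hb ha (le_of_not_ge hba)
  calc (a + b) ^ q ≤ (2 * a) ^ q := by gcongr; linarith
    _ = 2 ^ q * a ^ q := Real.mul_rpow zero_le_two ha
    _ ≤ 2 ^ q * (a ^ q + b ^ q) := by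
      gcongr; exact le_add_of_nonneg_right (Real.rpow_nonneg hb q)

lemma inner_rpow_smul_sub_rpow_smul_pos {E : Type*} [NormedAddCommGroup E]
    [InnerProductSpace ℝ E] {p : ℝ} (hp : 1 < p) {a b : E} (hab : a ≠ b) :
    0 < ⟪‖a‖ ^ (p - 2) • a - ‖b‖ ^ (p - 2) • b, a - b⟫ := by
  have hexpand : ⟪‖a‖ ^ (p - 2) • a - ‖b‖ ^ (p - 2) • b, a - b⟫ =
      ‖a‖ ^ (p - 2) * (‖a‖ ^ 2 - ⟪a, b⟫) + ‖b‖ ^ (p - 2) * (‖b‖ ^ 2 - ⟪a, b⟫) := by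
    simp only [inner_sub_left, inner_sub_right, real_inner_smul_left, real_inner_self_eq_norm_sq,
      real_inner_comm a b]
    ring
  rw [hexpand]
  rcases eq_or_ne ‖a‖ ‖b‖ with hnorm | hnorm
  · -- Here the left-hand side is `‖a‖ ^ (p - 2) * ‖a - b‖ ^ 2`.
    have ha : 0 < ‖a‖ := by
      refine norm_pos_iff.2 fun ha => hab ?_
      rw [ha, norm_zero, eq_comm, norm_eq_zero] at hnorm
      rw [ha, hnorm]
    have hsub : 0 < ‖a - b‖ ^ 2 := pow_pos (norm_pos_iff.2 (sub_ne_zero.2 hab)) 2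
    rw [norm_sub_sq_real, ← hnorm] at hsub
    rw [← hnorm]
    nlinarith [Real.rpow_pos_of_pos ha (p - 2)]
  · -- Cauchy–Schwarz reduces the claim to the strict monotonicity of `t ↦ t ^ (p - 1)`.
    have hmono : 0 < (‖a‖ ^ (p - 1) - ‖b‖ ^ (p - 1)) * (‖a‖ - ‖b‖) := by
      rcases hnorm.lt_or_gt with hlt | hlt
      · have := Real.rpow_lt_rpow (norm_nonneg a) hlt (by linarith : 0 < p - 1)
        exact mul_pos_of_neg_of_neg (by linarith) (by linarith)
      · have := Real.rpow_lt_rpow (norm_nonneg b) hlt (by linarith : 0 < p - 1)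
        exact mul_pos (by linarith) (by linarith)
    rw [← Real.rpow_sub_two_mul_self (norm_nonneg a) hp.ne',
      ← Real.rpow_sub_two_mul_self (norm_nonneg b) hp.ne'] at hmono
    nlinarith [real_inner_le_norm a b, Real.rpow_nonneg (norm_nonneg a) (p - 2),
      Real.rpow_nonneg (norm_nonneg b) (p - 2)]

section Integrability

variable {E : Type*} [NormedAddCommGroup E] [MeasurableSpace E] [OpensMeasurableSpace E]
  {μ : Measure E} {g : E → ℝ}

lemma integrable_norm_add_rpow_mul {q : ℝ} (hq : 0 ≤ q) (hg : Integrable g μ)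
    (hgq : Integrable (fun x => ‖x‖ ^ q * g x) μ) (z : E) :
    Integrable (fun x => ‖x + z‖ ^ q * g x) μ := by
  refine ((hgq.norm.add (hg.norm.const_mul (‖z‖ ^ q))).const_mul (2 ^ q)).mono' ?_ ?_
  · exact ((continuous_add_const z).norm.rpow_const fun _ => Or.inr hq).aestronglyMeasurable.mul
      hg.aestronglyMeasurable
  · refine Filter.Eventually.of_forall fun x => ?_
    simp only [norm_mul, Real.norm_of_nonneg (Real.rpow_nonneg (norm_nonneg _) q)]
    calc ‖x + z‖ ^ q * ‖g x‖ ≤ (‖x‖ + ‖z‖) ^ q * ‖g x‖ := by gcongr; exact norm_add_le x z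
      _ ≤ 2 ^ q * (‖x‖ ^ q + ‖z‖ ^ q) * ‖g x‖ := by
        gcongr; exact Real.add_rpow_le_two_rpow_mul (norm_nonneg x) (norm_nonneg z) hq
      _ = 2 ^ q * (‖x‖ ^ q * ‖g x‖ + ‖z‖ ^ q * ‖g x‖) := by ring

lemma integrable_norm_add_rpow_mul_apply_mul [NormedSpace ℝ E] {p : ℝ} (hp : 1 < p)
    (hg : Integrable g μ) (hgp : Integrable (fun x => ‖x‖ ^ (p - 1) * g x) μ)
    (ℓ : E →L[ℝ] ℝ) (z : E) :
    Integrable (fun x => ‖x + z‖ ^ (p - 2) * ℓ (x + z) * g x) μ := by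
  refine ((integrable_norm_add_rpow_mul (by linarith) hg hgp z).norm.const_mul ‖ℓ‖).mono' ?_ ?_
  · have : Measurable fun x => ‖x + z‖ ^ (p - 2) :=
      ((continuous_add_const z).norm.measurable).pow_const _
    exact (this.aestronglyMeasurable.mul
      (ℓ.continuous.comp (continuous_add_const z)).aestronglyMeasurable).mul hg.aestronglyMeasurable
  · refine Filter.Eventually.of_forall fun x => ?_
    have hnn := Real.rpow_nonneg (norm_nonneg (x + z)) (p - 2)
    simp only [norm_mul, Real.norm_of_nonneg hnn,
      Real.norm_of_nonneg (Real.rpow_nonneg (norm_nonneg (x + z)) (p - 1))]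
    calc ‖x + z‖ ^ (p - 2) * ‖ℓ (x + z)‖ * ‖g x‖
        ≤ ‖x + z‖ ^ (p - 2) * (‖ℓ‖ * ‖x + z‖) * ‖g x‖ := by gcongr; exact ℓ.le_opNorm _
      _ = ‖ℓ‖ * (‖x + z‖ ^ (p - 1) * ‖g x‖) := by
        rw [← Real.rpow_sub_two_mul_self (norm_nonneg _) hp.ne']; ring

end Integrability

lemma integral_eq_zero_of_odd {E : Type*} [NormedAddCommGroup E] [MeasurableSpace E]
    [MeasurableNeg E] {μ : Measure E} [μ.IsNegInvariant] {f : E → ℝ}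
    (hf : f.Odd) : ∫ x, f x ∂μ = 0 := by
  have h := integral_neg_eq_self f μ
  simp only [hf _, integral_neg] at h
  linarith

theorem eq_zero_of_integral_norm_add_rpow_mul_inner_mul_eq_zero {E : Type*}
    [NormedAddCommGroup E] [InnerProductSpace ℝ E] [MeasurableSpace E] [BorelSpace E]
    {μ : Measure E} [μ.IsNegInvariant] [NeZero μ] {g : E → ℝ} {p : ℝ} (hp : 1 < p)
    (hg_even : g.Even) (hg_pos : ∀ x, 0 < g x) (hg : Integrable g μ)
    (hgp : Integrable (fun x => ‖x‖ ^ (p - 1) * g x) μ) {y : E}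
    (h : ∫ x, ‖x + y‖ ^ (p - 2) * ⟪x + y, y⟫ * g x ∂μ = 0) : y = 0 := by
  by_contra hy
  have hint (z : E) : Integrable (fun x => ‖x + z‖ ^ (p - 2) * ⟪x + z, y⟫ * g x) μ := by
    simpa [real_inner_comm] using
      integrable_norm_add_rpow_mul_apply_mul hp hg hgp (innerSL ℝ y) z
  have h_odd : ∫ x, ‖x‖ ^ (p - 2) * ⟪x, y⟫ * g x ∂μ = 0 :=
    integral_eq_zero_of_odd fun x => by simp [hg_even _, inner_neg_left]
  have h_diff_pos (x : E) :
      0 < (‖x + y‖ ^ (p - 2) * ⟪x + y, y⟫ - ‖x‖ ^ (p - 2) * ⟪x, y⟫) * g x := by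
    refine mul_pos ?_ (hg_pos x)
    have hmono := inner_rpow_smul_sub_rpow_smul_pos hp (a := x + y) (b := x) (by simpa using hy)
    rwa [add_sub_cancel_left, inner_sub_left, real_inner_smul_left, real_inner_smul_left] at hmono
  have h0 : Integrable (fun x => ‖x‖ ^ (p - 2) * ⟪x, y⟫ * g x) μ := by simpa using hint 0
  have h_int_pos :
      0 < ∫ x, (‖x + y‖ ^ (p - 2) * ⟪x + y, y⟫ - ‖x‖ ^ (p - 2) * ⟪x, y⟫) * g x ∂μ := by
    refine (integral_pos_iff_support_of_nonneg (fun x => (h_diff_pos x).le)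
      (((hint y).sub h0).congr (ae_of_all _ fun x => (sub_mul _ _ _).symm))).2 ?_
    rw [Function.support_eq_univ fun x => (h_diff_pos x).ne']
    exact Measure.measure_univ_pos.2 (NeZero.ne μ)
  simp only [sub_mul] at h_int_pos
  rw [integral_sub (hint y) h0, h, h_odd, sub_zero] at h_int_pos
  exact h_int_pos.false

theorem stmt_8_general {N : ℕ} (w : EuclideanSpace ℝ (Fin N) → ℝ) (ρ : ℝ → ℝ)
    (hrad : ∀ x, w x = ρ ‖x‖) (hpos : ∀ x, 0 < w x)
    (hL2 : Integrable (fun x : EuclideanSpace ℝ (Fin N) => (w x) ^ 2))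
    (p : ℝ) (hp : 1 < p)
    (hint : Integrable (fun x : EuclideanSpace ℝ (Fin N) => ‖x‖ ^ (p - 1) * (w x) ^ 2))
    (y : EuclideanSpace ℝ (Fin N))
    (hmom : ∀ j : Fin N,
      ∫ x : EuclideanSpace ℝ (Fin N), ‖x + y‖ ^ (p - 2) * ((x + y) j) * (w x) ^ 2 = 0) :
    y = 0 := by
  have hcoord (j : Fin N) :
      Integrable (fun x => ‖x + y‖ ^ (p - 2) * (x + y) j * w x ^ 2) :=
    integrable_norm_add_rpow_mul_apply_mul hp hL2 hint (EuclideanSpace.proj j) y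
  refine eq_zero_of_integral_norm_add_rpow_mul_inner_mul_eq_zero hp (g := fun x => w x ^ 2)
    (fun x => by simp only [hrad, norm_neg]) (fun x => pow_pos (hpos x) 2) hL2 hint ?_
  calc ∫ x, ‖x + y‖ ^ (p - 2) * ⟪x + y, y⟫ * w x ^ 2
      = ∫ x, ∑ j, y j * (‖x + y‖ ^ (p - 2) * (x + y) j * w x ^ 2) := by
        congr with x
        simp only [PiLp.inner_apply, RCLike.inner_apply, conj_trivial, Finset.mul_sum,
          Finset.sum_mul]
        exact Finset.sum_congr rfl fun j _ => by ring
    _ = ∑ j, y j * ∫ x, ‖x + y‖ ^ (p - 2) * (x + y) j * w x ^ 2 := by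
        rw [integral_finsetSum _ fun j _ => (hcoord j).const_mul _]
        simp only [integral_const_mul]
    _ = 0 := by simp only [hmom, mul_zero, Finset.sum_const_zero]

/-- If `w` is a positive, strictly radially decreasing profile with suitable
integrability, and all weighted first moments `∫ |x+y|^{p-2}(x+y)ⱼ w²(x) dx` vanish,
then the translation `y` must be `0`. -/
theorem stmt_8 {N : ℕ} (w : EuclideanSpace ℝ (Fin N) → ℝ) (ρ : ℝ → ℝ)
    (hrad : ∀ x, w x = ρ ‖x‖) (hpos : ∀ x, 0 < w x)
    (hdec : StrictAntiOn ρ (Set.Ici (0 : ℝ)))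
    (hL2 : Integrable (fun x : EuclideanSpace ℝ (Fin N) => (w x) ^ 2))
    (p : ℝ) (hp : 1 < p)
    (hint : Integrable (fun x : EuclideanSpace ℝ (Fin N) => ‖x‖ ^ (p - 1) * (w x) ^ 2))
    (y : EuclideanSpace ℝ (Fin N))
    (hmom : ∀ j : Fin N,
      ∫ x : EuclideanSpace ℝ (Fin N), ‖x + y‖ ^ (p - 2) * ((x + y) j) * (w x) ^ 2 = 0) :
    y = 0 :=
  stmt_8_general w ρ hrad hpos hL2 p hp hint y hmom
end
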